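/- Let H : ℂ^N → ℂ^N be linear and self-adjoint, let Û : ℂ^R → ℂ^N be a linear isometry with adjoint Û*, and let c : [t₀,t₁] → ℂ^R solve c'(t) = −i·Û* H(Û c(t)). Then the energy E(t) := ⟨Û c(t), H(Û c(t))⟩ is constant in t. -/

import Mathlib

open scoped InnerProductSpace

/-! The compressed generator `A = Uh* H Uh` is symmetric and the energy equals `⟪c, A c⟫`.
Along `c' = -i A c` its derivative is `⟪c, A c'⟫ + ⟪c', A c⟫ = -i ‖A c‖² + i ‖A c‖² = 0`,
so it is constant by the mean value theorem. -/

section SchrodingerFlow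

variable {E : Type*} [NormedAddCommGroup E] [InnerProductSpace ℂ E]

theorem HasDerivAt.inner_apply_self (A : E →L[ℂ] E) {u : ℝ → E} {u' : E} {t : ℝ}
    (hu : HasDerivAt u u' t) :
    HasDerivAt (fun s => ⟪u s, A (u s)⟫_ℂ) (⟪u t, A u'⟫_ℂ + ⟪u', A (u t)⟫_ℂ) t :=
  hu.inner ℂ ((A.restrictScalars ℝ).hasFDerivAt.comp_hasDerivAt t hu)

theorem LinearMap.IsSymmetric.inner_apply_self_add_inner_neg_I_smul {A : E →L[ℂ] E}
    (hA : (A : E →ₗ[ℂ] E).IsSymmetric) (x : E) :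
    ⟪x, A (-(Complex.I • A x))⟫_ℂ + ⟪-(Complex.I • A x), A x⟫_ℂ = 0 := by
  have hsymm : ⟪x, A (A x)⟫_ℂ = ⟪A x, A x⟫_ℂ := (hA x (A x)).symm
  simp only [map_neg, map_smul, inner_neg_right, inner_neg_left, inner_smul_right,
    inner_smul_left, Complex.conj_I, hsymm]
  ring

theorem LinearMap.IsSymmetric.inner_apply_self_eq_of_hasDerivAt {A : E →L[ℂ] E}
    (hA : (A : E →ₗ[ℂ] E).IsSymmetric) {c : ℝ → E} {a b : ℝ}
    (hc : ∀ t ∈ Set.Icc a b, HasDerivAt c (-(Complex.I • A (c t))) t) :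
    ∀ t ∈ Set.Icc a b, ⟪c t, A (c t)⟫_ℂ = ⟪c a, A (c a)⟫_ℂ := by
  have henergy : ∀ t ∈ Set.Icc a b, HasDerivAt (fun s => ⟪c s, A (c s)⟫_ℂ) 0 t := fun t ht => by
    simpa only [hA.inner_apply_self_add_inner_neg_I_smul] using
      (hc t ht).inner_apply_self A
  exact constant_of_has_deriv_right_zero
    (fun t ht => (henergy t ht).continuousAt.continuousWithinAt)
    (fun t ht => (henergy t (Set.Ico_subset_Icc_self ht)).hasDerivWithinAt)

end SchrodingerFlow

theorem energy_conserved_schrodinger_general {N R : ℕ} (t₀ t₁ : ℝ)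
    (H : EuclideanSpace ℂ (Fin N) →ₗ[ℂ] EuclideanSpace ℂ (Fin N))
    (hH : ∀ y z : EuclideanSpace ℂ (Fin N), ⟪H y, z⟫_ℂ = ⟪y, H z⟫_ℂ)
    (Uh : EuclideanSpace ℂ (Fin R) →ₗ[ℂ] EuclideanSpace ℂ (Fin N))
    (c : ℝ → EuclideanSpace ℂ (Fin R))
    (hc : ∀ t ∈ Set.Icc t₀ t₁,
      HasDerivAt c (-(Complex.I • (LinearMap.adjoint Uh) (H (Uh (c t))))) t) :
    ∀ t ∈ Set.Icc t₀ t₁,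
      ⟪Uh (c t), H (Uh (c t))⟫_ℂ = ⟪Uh (c t₀), H (Uh (c t₀))⟫_ℂ := by
  set A := LinearMap.toContinuousLinearMap (LinearMap.adjoint Uh ∘ₗ H ∘ₗ Uh)
  have hA : (A : EuclideanSpace ℂ (Fin R) →ₗ[ℂ] _).IsSymmetric := by
    simpa only [A, LinearMap.coe_toContinuousLinearMap] using
      LinearMap.IsSymmetric.adjoint_conj hH Uh
  have henergy : ∀ t, ⟪Uh (c t), H (Uh (c t))⟫_ℂ = ⟪c t, A (c t)⟫_ℂ := fun t =>
    (LinearMap.adjoint_inner_right Uh (c t) _).symm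
  simpa only [henergy] using hA.inner_apply_self_eq_of_hasDerivAt hc

/-- Energy conservation for the projected Schrödinger equation: if `H` is
self-adjoint, `Uh` is a linear isometry and `c'(t) = -i Uh* H(Uh c(t))`, then
the energy `⟨Uh c(t), H(Uh c(t))⟩` is constant on `[t₀,t₁]`. -/
theorem energy_conserved_schrodinger {N R : ℕ} (t₀ t₁ : ℝ)
    (H : EuclideanSpace ℂ (Fin N) →ₗ[ℂ] EuclideanSpace ℂ (Fin N))
    (hH : ∀ y z : EuclideanSpace ℂ (Fin N), ⟪H y, z⟫_ℂ = ⟪y, H z⟫_ℂ)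
    (Uh : EuclideanSpace ℂ (Fin R) →ₗ[ℂ] EuclideanSpace ℂ (Fin N))
    (hUh : ∀ x y : EuclideanSpace ℂ (Fin R), ⟪Uh x, Uh y⟫_ℂ = ⟪x, y⟫_ℂ)
    (c : ℝ → EuclideanSpace ℂ (Fin R))
    (hc : ∀ t ∈ Set.Icc t₀ t₁,
      HasDerivAt c (-(Complex.I • (LinearMap.adjoint Uh) (H (Uh (c t))))) t) :
    ∀ t ∈ Set.Icc t₀ t₁,
      ⟪Uh (c t), H (Uh (c t))⟫_ℂ = ⟪Uh (c t₀), H (Uh (c t₀))⟫_ℂ :=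
  energy_conserved_schrodinger_general t₀ t₁ H hH Uh c hc
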